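/- Let n ≥ 1 be an integer, R0 ≥ 1, and let 0 < γ0 ≤ 1 ≤ γ1 be real constants. Let A ⊂ B(0,R0/2) ⊂ ℂ^n be a finite set with at least two elements and weight function ν : A → (0,∞) satisfying ν(a) ≥ γ0 for every a ∈ A and Σ_{a∈A} ν(a) ≤ γ1. Then for every z ∈ B(0,R0/2) \ A, one has ψ(z,A) ≤ φ(z,A) ≤ ψ(z,A) + (γ1²/γ0)·log(R0/σ_A). -/

import Mathlib

/-!
Each term `ν a * log (‖z - a‖ / R0)` is nonpositive because `‖z - a‖ < R0`, so `ψ` lies below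
every term and hence below `φ`. Conversely `φ` is at most the term of the point `b ∈ A` nearest
to `z`, which is `ψ` minus the other terms. For `a ≠ b` the separation of `A` and the triangle
inequality give `‖z - a‖ ≥ σ_A`, so the other terms together are at least
`-(∑ ν) * log (R0 / σ_A) ≥ -γ1 * log (R0 / σ_A)`, and `γ1 ≤ γ1 ^ 2 / γ0` since `γ0 ≤ γ1`.
-/

open Finset Metric Real

theorem Finset.sum_le_inf'_of_nonpos {ι N : Type*} [AddCommMonoid N] [LinearOrder N]
    [AddLeftMono N] {s : Finset ι} (hs : s.Nonempty) {f : ι → N} (hf : ∀ i ∈ s, f i ≤ 0) :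
    ∑ i ∈ s, f i ≤ s.inf' hs f :=
  le_inf' hs f fun i hi => by
    simpa using sum_le_sum_of_subset_of_nonpos' (singleton_subset_iff.2 hi) fun j hj _ => hf j hj

theorem norm_sub_lt_of_mem_ball_zero {E : Type*} [SeminormedAddCommGroup E] {r : ℝ} {x y : E}
    (hx : x ∈ ball 0 (r / 2)) (hy : y ∈ ball 0 (r / 2)) : ‖x - y‖ < r := by
  rw [mem_ball_zero_iff] at hx hy
  linarith [norm_sub_le x y]

theorem le_norm_sub_of_norm_sub_le_of_two_mul_le {E : Type*} [SeminormedAddCommGroup E]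
    {σ : ℝ} {z a b : E} (hb : ‖z - b‖ ≤ ‖z - a‖) (hab : 2 * σ ≤ ‖a - b‖) : σ ≤ ‖z - a‖ := by
  linarith [norm_sub_le_norm_sub_add_norm_sub a z b, norm_sub_rev a z]

theorem mul_log_div_nonpos {w x R : ℝ} (hw : 0 ≤ w) (hx : 0 ≤ x) (hxR : x ≤ R) :
    w * log (x / R) ≤ 0 :=
  mul_nonpos_of_nonneg_of_nonpos hw <|
    log_nonpos (div_nonneg hx (hx.trans hxR)) (div_le_one_of_le₀ hxR (hx.trans hxR))

theorem neg_mul_log_div_le {w x R σ : ℝ} (hw : 0 ≤ w) (hσ : 0 < σ) (hσx : σ ≤ x) (hR : 0 < R) :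
    -(w * log (x / R)) ≤ w * log (R / σ) := by
  have hx : 0 < x := hσ.trans_le hσx
  rw [← mul_neg, ← log_inv, inv_div]
  gcongr

theorem Finset.inf'_mul_log_le_sum_add_mul_log {E : Type*} [SeminormedAddCommGroup E]
    {s : Finset E} (hs : s.Nonempty) {w : E → ℝ} (hw : ∀ a ∈ s, 0 ≤ w a) {σ R : ℝ}
    (hσ : 0 < σ) (hσR : σ ≤ R)
    (hsep : ∀ a ∈ s, ∀ b ∈ s, a ≠ b → 2 * σ ≤ ‖a - b‖) (z : E) :
    s.inf' hs (fun a => w a * log (‖z - a‖ / R))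
      ≤ ∑ a ∈ s, w a * log (‖z - a‖ / R) + (∑ a ∈ s, w a) * log (R / σ) := by
  classical
  set f := fun a => w a * log (‖z - a‖ / R)
  obtain ⟨b, hb, hb_min⟩ := s.exists_min_image (fun a => ‖z - a‖) hs
  have hfar : ∀ a ∈ s.erase b, -f a ≤ w a * log (R / σ) := fun a ha' => by
    obtain ⟨hab, ha⟩ := mem_erase.1 ha'
    have hσa := le_norm_sub_of_norm_sub_le_of_two_mul_le (hb_min a ha) (hsep a ha b hb hab)
    exact neg_mul_log_div_le (hw a ha) hσ hσa (hσ.trans_le hσR)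
  have hlog : 0 ≤ log (R / σ) := log_nonneg ((one_le_div hσ).2 hσR)
  calc s.inf' hs f ≤ f b := inf'_le f hb
    _ = ∑ a ∈ s, f a + ∑ a ∈ s.erase b, -f a := by
      rw [← add_sum_erase s f hb, sum_neg_distrib]; ring
    _ ≤ ∑ a ∈ s, f a + (∑ a ∈ s.erase b, w a) * log (R / σ) := by
      rw [sum_mul]; gcongr with a ha; exact hfar a ha
    _ ≤ ∑ a ∈ s, f a + (∑ a ∈ s, w a) * log (R / σ) := by
      gcongr
      · exact fun a ha _ => hw a ha
      · exact erase_subset b s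

theorem stmt_5_general (n : ℕ) (R0 : ℝ)
    (γ0 γ1 : ℝ) (hγ0 : 0 < γ0) (hγ0' : γ0 ≤ 1) (hγ1 : 1 ≤ γ1)
    (A : Finset (EuclideanSpace ℂ (Fin n))) (hA : A.Nonempty)
    (hAball : (A : Set (EuclideanSpace ℂ (Fin n))) ⊆ Metric.ball 0 (R0 / 2))
    (ν : EuclideanSpace ℂ (Fin n) → ℝ)
    (hνpos : ∀ a ∈ A, 0 < ν a)
    (hνsum : ∑ a ∈ A, ν a ≤ γ1)
    (σA : ℝ)
    (hσ1 : ∀ a ∈ A, ∀ b ∈ A, a ≠ b → 2 * σA ≤ ‖a - b‖)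
    (hσ2 : ∃ a ∈ A, ∃ b ∈ A, a ≠ b ∧ ‖a - b‖ = 2 * σA)
    (z : EuclideanSpace ℂ (Fin n))
    (hzball : z ∈ Metric.ball (0 : EuclideanSpace ℂ (Fin n)) (R0 / 2)) :
    ∑ a ∈ A, ν a * Real.log (‖z - a‖ / R0)
      ≤ A.inf' hA (fun a => ν a * Real.log (‖z - a‖ / R0))
    ∧ A.inf' hA (fun a => ν a * Real.log (‖z - a‖ / R0))
      ≤ ∑ a ∈ A, ν a * Real.log (‖z - a‖ / R0) + γ1 ^ 2 / γ0 * Real.log (R0 / σA) := by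
  have hν : ∀ a ∈ A, 0 ≤ ν a := fun a ha => (hνpos a ha).le
  refine ⟨sum_le_inf'_of_nonpos hA fun a ha => mul_log_div_nonpos (hν a ha) (norm_nonneg _)
    (norm_sub_lt_of_mem_ball_zero hzball (hAball ha)).le, ?_⟩
  obtain ⟨a, ha, b, hb, hab, hσab⟩ := hσ2
  have hσ : 0 < σA := by linarith [norm_pos_iff.2 (sub_ne_zero.2 hab)]
  have hσR : σA ≤ R0 := by linarith [norm_sub_lt_of_mem_ball_zero (hAball ha) (hAball hb)]
  have hγ : γ1 ≤ γ1 ^ 2 / γ0 := by rw [le_div_iff₀ hγ0]; nlinarith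
  calc _ ≤ _ := inf'_mul_log_le_sum_add_mul_log hA hν hσ hσR hσ1 z
    _ ≤ _ := by
      have hlog : 0 ≤ log (R0 / σA) := log_nonneg ((one_le_div hσ).2 hσR)
      gcongr
      exact hνsum.trans hγ

/-- case m = n. For every z ∈ B(0,R0/2) \ A:
ψ(z,A) ≤ φ(z,A) ≤ ψ(z,A) + (γ1²/γ0)·log(R0/σ_A). -/
theorem stmt_5 (n : ℕ) (hn : 1 ≤ n) (R0 : ℝ) (hR0 : 1 ≤ R0)
    (γ0 γ1 : ℝ) (hγ0 : 0 < γ0) (hγ0' : γ0 ≤ 1) (hγ1 : 1 ≤ γ1)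
    (A : Finset (EuclideanSpace ℂ (Fin n))) (hA : A.Nonempty) (hcard : 1 < A.card)
    (hAball : (A : Set (EuclideanSpace ℂ (Fin n))) ⊆ Metric.ball 0 (R0 / 2))
    (ν : EuclideanSpace ℂ (Fin n) → ℝ)
    (hνpos : ∀ a ∈ A, 0 < ν a)
    (hνlb : ∀ a ∈ A, γ0 ≤ ν a)
    (hνsum : ∑ a ∈ A, ν a ≤ γ1)
    (σA : ℝ)
    (hσ1 : ∀ a ∈ A, ∀ b ∈ A, a ≠ b → 2 * σA ≤ ‖a - b‖)
    (hσ2 : ∃ a ∈ A, ∃ b ∈ A, a ≠ b ∧ ‖a - b‖ = 2 * σA)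
    (z : EuclideanSpace ℂ (Fin n))
    (hzball : z ∈ Metric.ball (0 : EuclideanSpace ℂ (Fin n)) (R0 / 2))
    (hznA : z ∉ (A : Set (EuclideanSpace ℂ (Fin n)))) :
    ∑ a ∈ A, ν a * Real.log (‖z - a‖ / R0)
      ≤ A.inf' hA (fun a => ν a * Real.log (‖z - a‖ / R0))
    ∧ A.inf' hA (fun a => ν a * Real.log (‖z - a‖ / R0))
      ≤ ∑ a ∈ A, ν a * Real.log (‖z - a‖ / R0) + γ1 ^ 2 / γ0 * Real.log (R0 / σA) :=
  stmt_5_general n R0 γ0 γ1 hγ0 hγ0' hγ1 A hA hAball ν hνpos hνsum σA hσ1 hσ2 z hzball
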